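/- arXiv:2301.11230 — 3 statements merged into one kernel-verified Lean document; each statement's English description precedes it below -/
import Mathlib

section
/- In the ring R, the element y satisfies the relation y² = y + s⁻¹·y + t²s²·y + t⁴s⁵·y; that is, this identity is a consequence of the three defining relations of R. -/
/-!
The ring `R = ℤ[s^{±1}, t^{±1}, x, y] / (x³ = 2t²sx + t³s²y, xy = t³s³y + t⁵s⁶y, t⁶s⁸ = 1)`
is modeled as a quotient of the polynomial ring `ℤ[s, s', t, t', x, y]` (variables indexed by
`Fin 6`: `0 ↦ s`, `1 ↦ s⁻¹`, `2 ↦ t`, `3 ↦ t⁻¹`, `4 ↦ x`, `5 ↦ y`) by the ideal generated by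
`s·s' − 1`, `t·t' − 1` (making `s` and `t` invertible) and the three defining relations.
-/

open MvPolynomial

noncomputable section

def boRel : Ideal (MvPolynomial (Fin 6) ℤ) :=
  Ideal.span
    { X 0 * X 1 - 1,
      X 2 * X 3 - 1,
      X 4 ^ 3 - 2 * X 2 ^ 2 * X 0 * X 4 - X 2 ^ 3 * X 0 ^ 2 * X 5,
      X 4 * X 5 - X 2 ^ 3 * X 0 ^ 3 * X 5 - X 2 ^ 5 * X 0 ^ 6 * X 5,
      X 2 ^ 6 * X 0 ^ 8 - 1 }

def R : Type := MvPolynomial (Fin 6) ℤ ⧸ boRel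

instance : CommRing R := inferInstanceAs (CommRing (MvPolynomial (Fin 6) ℤ ⧸ boRel))

/-- the element `s` of `R` -/
def s : R := Ideal.Quotient.mk boRel (X 0)
/-- the element `s⁻¹` of `R` -/
def si : R := Ideal.Quotient.mk boRel (X 1)
/-- the element `t` of `R` -/
def t : R := Ideal.Quotient.mk boRel (X 2)
/-- the element `t⁻¹` of `R` -/
def ti : R := Ideal.Quotient.mk boRel (X 3)
/-- the element `x` of `R` -/
def x : R := Ideal.Quotient.mk boRel (X 4)
/-- the element `y` of `R` -/
def y : R := Ideal.Quotient.mk boRel (X 5)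

/-!
Write `a = t³s³ + t⁵s⁶`, so that `x y = a y`. Multiplying the cubic relation by `y` turns
`x³ y = a³ y` into `t³s² y² = (a³ - 2t²s a) y`. Since `t³s²` is a unit, it remains to see that
`a³ - 2t²s a = t³s² (1 + s⁻¹ + t²s² + t⁴s⁵)`, which holds once `t⁶s⁸ = 1` is used.
-/

lemma mul_sq_eq_of_pow_three_eq_of_mul_eq {A : Type*} [CommRing A] {x y a b c : A}
    (hcube : x ^ 3 = b * x + c * y) (heig : x * y = a * y) :
    c * y ^ 2 = (a ^ 3 - b * a) * y := by
  have hpow : x ^ 3 * y = a ^ 3 * y := by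
    linear_combination (x ^ 2 + a * x + a ^ 2) * heig
  linear_combination -y * hcube + hpow - b * heig

lemma s_mul_si : s * si = 1 := by
  have h : Ideal.Quotient.mk boRel (X 0 * X 1) = Ideal.Quotient.mk boRel 1 :=
    Ideal.Quotient.eq.mpr (Ideal.subset_span (by simp))
  simp only [map_mul, map_one] at h
  exact h

lemma t_mul_ti : t * ti = 1 := by
  have h : Ideal.Quotient.mk boRel (X 2 * X 3) = Ideal.Quotient.mk boRel 1 :=
    Ideal.Quotient.eq.mpr (Ideal.subset_span (by simp))
  simp only [map_mul, map_one] at h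
  exact h

lemma x_pow_three : x ^ 3 = 2 * t ^ 2 * s * x + t ^ 3 * s ^ 2 * y := by
  have h : Ideal.Quotient.mk boRel (X 4 ^ 3) =
      Ideal.Quotient.mk boRel (2 * X 2 ^ 2 * X 0 * X 4 + X 2 ^ 3 * X 0 ^ 2 * X 5) :=
    Ideal.Quotient.eq.mpr (Ideal.subset_span (by simp [sub_sub]))
  simp only [map_add, map_mul, map_pow, map_ofNat] at h
  exact h

lemma x_mul_y : x * y = t ^ 3 * s ^ 3 * y + t ^ 5 * s ^ 6 * y := by
  have h : Ideal.Quotient.mk boRel (X 4 * X 5) =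
      Ideal.Quotient.mk boRel (X 2 ^ 3 * X 0 ^ 3 * X 5 + X 2 ^ 5 * X 0 ^ 6 * X 5) :=
    Ideal.Quotient.eq.mpr (Ideal.subset_span (by simp [sub_sub]))
  simp only [map_add, map_mul, map_pow] at h
  exact h

lemma t_pow_six_mul_s_pow_eight : t ^ 6 * s ^ 8 = 1 := by
  have h : Ideal.Quotient.mk boRel (X 2 ^ 6 * X 0 ^ 8) = Ideal.Quotient.mk boRel 1 :=
    Ideal.Quotient.eq.mpr (Ideal.subset_span (by simp))
  simp only [map_mul, map_pow, map_one] at h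
  exact h

/-- In the ring `R`, the identity `y² = y + s⁻¹·y + t²s²·y + t⁴s⁵·y` holds, as a consequence of
the three defining relations of `R`. -/
theorem y_sq : y ^ 2 = y + si * y + t ^ 2 * s ^ 2 * y + t ^ 4 * s ^ 5 * y := by
  have hunit : IsUnit (t ^ 3 * s ^ 2) :=
    ((IsUnit.of_mul_eq_one ti t_mul_ti).pow 3).mul ((IsUnit.of_mul_eq_one si s_mul_si).pow 2)
  refine hunit.mul_left_cancel ?_
  calc t ^ 3 * s ^ 2 * y ^ 2
      = ((t ^ 3 * s ^ 3 + t ^ 5 * s ^ 6) ^ 3 - 2 * t ^ 2 * s * (t ^ 3 * s ^ 3 + t ^ 5 * s ^ 6)) * y :=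
        mul_sq_eq_of_pow_three_eq_of_mul_eq x_pow_three (x_mul_y.trans (add_mul _ _ _).symm)
    _ = t ^ 3 * s ^ 2 * (y + si * y + t ^ 2 * s ^ 2 * y + t ^ 4 * s ^ 5 * y) := by
        linear_combination
          (t ^ 3 * s + 3 * t ^ 5 * s ^ 4 + 3 * t ^ 7 * s ^ 7 + t ^ 3 * s ^ 2 * (t ^ 6 * s ^ 8 + 1)) * y
              * t_pow_six_mul_s_pow_eight - t ^ 3 * s * y * s_mul_si

end
end

section
/- There exists a ring homomorphism D : R → R satisfying D(t) = t⁻¹, D(s) = s⁻¹, D(x) = t⁻²s⁻¹·x, and D(y) = s·y; moreover D ∘ D is the identity map of R, so D is a ring automorphism of R of order two. -/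
/-!
The ring `R = ℤ[s^{±1}, t^{±1}, x, y] / (x³ = 2t²sx + t³s²y, xy = t³s³y + t⁵s⁶y, t⁶s⁸ = 1)`
is modeled as a quotient of the polynomial ring `ℤ[s, s', t, t', x, y]` (variables indexed by
`Fin 6`: `0 ↦ s`, `1 ↦ s⁻¹`, `2 ↦ t`, `3 ↦ t⁻¹`, `4 ↦ x`, `5 ↦ y`) by the ideal generated by
`s·s' − 1`, `t·t' − 1` (making `s` and `t` invertible) and the three defining relations.
-/

open MvPolynomial

noncomputable section

/-! A ring homomorphism `R →+* A` is the same as a tuple `(S, S⁻¹, T, T⁻¹, X, Y)` in `A` satisfying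
the defining relations. The dual tuple `(S⁻¹, S, T⁻¹, T, T⁻²S⁻¹X, SY)` satisfies them again: once
the units are cleared, the cubic relation is carried to itself, and the relation for `XY` to itself
up to the factor `T⁶S⁸ = 1`. Dualizing twice multiplies `X` by `(T T⁻¹)²(S S⁻¹)` and `Y` by
`S⁻¹S`, so `D ∘ D = id`. -/

structure IsBoPoint {A : Type*} [CommRing A] (S Si T Ti X Y : A) : Prop where
  s_mul_si : S * Si = 1
  t_mul_ti : T * Ti = 1
  x_cube : X ^ 3 = 2 * T ^ 2 * S * X + T ^ 3 * S ^ 2 * Y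
  x_mul_y : X * Y = T ^ 3 * S ^ 3 * Y + T ^ 5 * S ^ 6 * Y
  t_pow_mul_s_pow : T ^ 6 * S ^ 8 = 1

namespace IsBoPoint

variable {A : Type*} [CommRing A] {S Si T Ti X Y : A}

theorem dual (h : IsBoPoint S Si T Ti X Y) :
    IsBoPoint Si S Ti T (Ti ^ 2 * Si * X) (S * Y) where
  s_mul_si := by rw [mul_comm, h.s_mul_si]
  t_mul_ti := by rw [mul_comm, h.t_mul_ti]
  x_cube := calc
    (Ti ^ 2 * Si * X) ^ 3 = Ti ^ 6 * Si ^ 3 * X ^ 3 := by ring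
    _ = Ti ^ 6 * Si ^ 3 * (2 * T ^ 2 * S * X + T ^ 3 * S ^ 2 * Y) := by rw [h.x_cube]
    _ = (T * Ti) ^ 2 * (S * Si) * (2 * Ti ^ 2 * Si * (Ti ^ 2 * Si * X)) +
          (T * Ti) ^ 3 * (S * Si) * (Ti ^ 3 * Si ^ 2 * (S * Y)) := by ring
    _ = 2 * Ti ^ 2 * Si * (Ti ^ 2 * Si * X) + Ti ^ 3 * Si ^ 2 * (S * Y) := by
      rw [h.s_mul_si, h.t_mul_ti]; ring
  x_mul_y := calc
    Ti ^ 2 * Si * X * (S * Y) = Ti ^ 2 * (S * Si) * (X * Y) := by ring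
    _ = Ti ^ 2 * (S * Si) * (T ^ 3 * S ^ 3 * Y + T ^ 5 * S ^ 6 * Y) := by rw [h.x_mul_y]
    _ = (T * Ti) ^ 2 * (S * Si) * (T * S ^ 3 * Y + T ^ 3 * S ^ 6 * Y) := by ring
    _ = (T * Ti) ^ 5 * (S * Si) ^ 6 * (T * S ^ 3 * Y) +
          (T * Ti) ^ 3 * (S * Si) ^ 3 * (T ^ 3 * S ^ 6 * Y) := by
      rw [h.s_mul_si, h.t_mul_ti]; ring
    _ = T ^ 6 * S ^ 8 * (Ti ^ 3 * Si ^ 3 * (S * Y) + Ti ^ 5 * Si ^ 6 * (S * Y)) := by ring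
    _ = Ti ^ 3 * Si ^ 3 * (S * Y) + Ti ^ 5 * Si ^ 6 * (S * Y) := by
      rw [h.t_pow_mul_s_pow, one_mul]
  t_pow_mul_s_pow := calc
    Ti ^ 6 * Si ^ 8 = T ^ 6 * S ^ 8 * (Ti ^ 6 * Si ^ 8) := by rw [h.t_pow_mul_s_pow, one_mul]
    _ = (T * Ti) ^ 6 * (S * Si) ^ 8 := by ring
    _ = 1 := by rw [h.s_mul_si, h.t_mul_ti, one_pow, one_pow, one_mul]

end IsBoPoint

theorem isBoPoint_generators : IsBoPoint s si t ti x y := by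
  have h : ∀ p ∈ _, Ideal.Quotient.mk boRel p = 0 := fun _ hp ↦
    Ideal.Quotient.eq_zero_iff_mem.mpr (Ideal.subset_span hp)
  simp only [Set.mem_insert_iff, Set.mem_singleton_iff, forall_eq_or_imp, forall_eq, map_sub,
    map_mul, map_pow, map_add, map_one, map_ofNat, sub_sub, sub_eq_zero] at h
  obtain ⟨hs, ht, hx, hxy, hts⟩ := h
  exact ⟨hs, ht, hx, hxy, hts⟩

namespace R

variable {A : Type*} [CommRing A] {S Si T Ti X Y : A}

theorem boRel_le_ker_eval₂Hom (h : IsBoPoint S Si T Ti X Y) :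
    boRel ≤ RingHom.ker (eval₂Hom (Int.castRingHom A) ![S, Si, T, Ti, X, Y]) := by
  rw [boRel, Ideal.span_le]
  simp only [Set.insert_subset_iff, Set.singleton_subset_iff, SetLike.mem_coe, RingHom.mem_ker,
    map_sub, map_add, map_mul, map_pow, map_one, map_ofNat, eval₂Hom_X', sub_sub, sub_eq_zero]
  exact ⟨h.s_mul_si, h.t_mul_ti, h.x_cube, h.x_mul_y, h.t_pow_mul_s_pow⟩

def lift (h : IsBoPoint S Si T Ti X Y) : R →+* A :=
  Ideal.Quotient.lift boRel _ fun _ hp ↦ boRel_le_ker_eval₂Hom h hp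

theorem ringHom_ext {f g : R →+* A} (hs : f s = g s) (hsi : f si = g si) (ht : f t = g t)
    (hti : f ti = g ti) (hx : f x = g x) (hy : f y = g y) : f = g := by
  refine Ideal.Quotient.ringHom_ext (MvPolynomial.ringHom_ext (fun _ ↦ by simp) ?_)
  intro i
  fin_cases i
  exacts [hs, hsi, ht, hti, hx, hy]

variable (h : IsBoPoint S Si T Ti X Y)

@[simp] theorem lift_s : lift h s = S := eval₂Hom_X' _ _ 0
@[simp] theorem lift_si : lift h si = Si := eval₂Hom_X' _ _ 1
@[simp] theorem lift_t : lift h t = T := eval₂Hom_X' _ _ 2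
@[simp] theorem lift_ti : lift h ti = Ti := eval₂Hom_X' _ _ 3
@[simp] theorem lift_x : lift h x = X := eval₂Hom_X' _ _ 4
@[simp] theorem lift_y : lift h y = Y := eval₂Hom_X' _ _ 5

end R

/-- There is a ring homomorphism `D : R → R` with `D(t) = t⁻¹`, `D(s) = s⁻¹`,
`D(x) = t⁻²s⁻¹·x`, `D(y) = s·y`, and `D ∘ D = id`, so `D` is a ring automorphism of `R` of
order two. -/
theorem exists_duality :
    ∃ D : R →+* R,
      D t = ti ∧ D s = si ∧ D x = ti ^ 2 * si * x ∧ D y = s * y ∧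
      D.comp D = RingHom.id R := by
  have hgen := isBoPoint_generators
  refine ⟨R.lift hgen.dual, R.lift_t _, R.lift_s _, R.lift_x _, R.lift_y _, ?_⟩
  refine R.ringHom_ext ?_ ?_ ?_ ?_ ?_ ?_ <;> simp only [RingHom.comp_apply, RingHom.id_apply,
    R.lift_s, R.lift_si, R.lift_t, R.lift_ti, R.lift_x, R.lift_y, map_mul, map_pow]
  · calc t ^ 2 * s * (ti ^ 2 * si * x) = (t * ti) ^ 2 * (s * si) * x := by ring
      _ = x := by rw [hgen.s_mul_si, hgen.t_mul_ti, one_pow, one_mul, one_mul]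
  · linear_combination y * hgen.s_mul_si

end
end

section
/- In the group algebra ℤ₍₂₎[Σ₃], the elements f₁, f₂, e form a complete system of orthogonal idempotents: f₁² = f₁, f₂² = f₂, e² = e, the products f₁f₂, f₂f₁, f₁e, ef₁, f₂e, ef₂ are all zero, and f₁ + f₂ + e = 1. -/
/-!
`ℤ₍₂₎` is the localization of `ℤ` at the prime ideal `(2)`, `Σ₃` is the symmetric group on
three letters (modeled as `Equiv.Perm (Fin 3)` with letters `1, 2, 3` corresponding to
`0, 1, 2`), and we work in the group algebra `ℤ₍₂₎[Σ₃]`.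
-/

noncomputable section

/-- The prime ideal `(2)` of `ℤ`. -/
def P : Ideal ℤ := Ideal.span {(2 : ℤ)}

instance : P.IsPrime :=
  (Ideal.span_singleton_prime (by norm_num)).mpr Int.prime_two

/-- The localization `ℤ₍₂₎` of `ℤ` at the prime `(2)`. -/
abbrev ZL : Type := Localization.AtPrime P

/-- `1/3 ∈ ℤ₍₂₎` (note `3 ∉ (2)`, so `3` is invertible in `ℤ₍₂₎`). -/
def third : ZL :=
  Localization.mk 1 ⟨3, show (3 : ℤ) ∉ P by
    rw [P, Ideal.mem_span_singleton]; omega⟩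

/-- The symmetric group `Σ₃` on `{1, 2, 3}`. -/
abbrev S3 : Type := Equiv.Perm (Fin 3)

/-- The group algebra `ℤ₍₂₎[Σ₃]`. -/
abbrev GA : Type := MonoidAlgebra ZL S3

/-- A permutation regarded as an element of the group algebra `ℤ₍₂₎[Σ₃]`. -/
def g (σ : S3) : GA := MonoidAlgebra.of ZL S3 σ

/-- the transposition `(1 2)` -/
def σ12 : S3 := Equiv.swap 0 1
/-- the transposition `(1 3)` -/
def σ13 : S3 := Equiv.swap 0 2
/-- the transposition `(2 3)` -/
def σ23 : S3 := Equiv.swap 1 2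
/-- the 3-cycle `(1 2 3)` -/
def c123 : S3 := finRotate 3
/-- the 3-cycle `(1 3 2)` -/
def c132 : S3 := (finRotate 3)⁻¹

/-- `f₁ = (1 + (1 2) − (1 3) − (1 2 3))/3 ∈ ℤ₍₂₎[Σ₃]` -/
def f₁ : GA := third • (1 + g σ12 - g σ13 - g c123)

/-- `f₂ = (1 + (1 3) − (1 2) − (1 3 2))/3 ∈ ℤ₍₂₎[Σ₃]` -/
def f₂ : GA := third • (1 + g σ13 - g σ12 - g c132)

/-- `e = (1 + (1 2 3) + (1 3 2))/3 ∈ ℤ₍₂₎[Σ₃]` -/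
def e : GA := third • (1 + g c123 + g c132)

/-! Each of `f₁`, `f₂`, `e` is `⅓ • x` with `x` an integral combination of permutations, and the
multiplication table of `Σ₃` gives `x₁² = 3 x₁`, `x₂² = 3 x₂`, `x₃² = 3 x₃`, `xᵢ xⱼ = 0` for `i ≠ j`
and `x₁ + x₂ + x₃ = 3`; so all that is needed from `ℤ₍₂₎` is that `3` is invertible. -/

theorem three_mul_third : third * 3 = 1 := by
  rw [third, Localization.mk_eq_mk']
  simpa using IsLocalization.mk'_spec ZL (1 : ℤ) ⟨3, _⟩

section ScaledProducts

variable {R A : Type*} [CommSemiring R] [NonUnitalNonAssocSemiring A] [Module R A]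
  [SMulCommClass R A A] [IsScalarTower R A A]

theorem smul_mul_smul_of_mul_eq_nsmul {t : R} {n : ℕ} (ht : t * n = 1) {x y z : A}
    (h : x * y = n • z) : (t • x) * (t • y) = t • z := by
  rw [smul_mul_smul_comm, h, ← Nat.cast_smul_eq_nsmul R, smul_smul, mul_assoc, ht, mul_one]

theorem smul_mul_smul_of_mul_eq_zero (t : R) {x y : A} (h : x * y = 0) :
    (t • x) * (t • y) = 0 := by
  rw [smul_mul_smul_comm, h, smul_zero]

end ScaledProducts

theorem g_mul_g (σ τ : S3) : g σ * g τ = g (σ * τ) :=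
  (map_mul (MonoidAlgebra.of ZL S3) σ τ).symm

theorem g_one : g 1 = 1 :=
  map_one (MonoidAlgebra.of ZL S3)

theorem σ12_mul_σ12 : σ12 * σ12 = 1 := by decide
theorem σ12_mul_σ13 : σ12 * σ13 = c132 := by decide
theorem σ12_mul_c123 : σ12 * c123 = σ23 := by decide
theorem σ12_mul_c132 : σ12 * c132 = σ13 := by decide
theorem σ13_mul_σ12 : σ13 * σ12 = c123 := by decide
theorem σ13_mul_σ13 : σ13 * σ13 = 1 := by decide
theorem σ13_mul_c123 : σ13 * c123 = σ12 := by decide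
theorem σ13_mul_c132 : σ13 * c132 = σ23 := by decide
theorem c123_mul_σ12 : c123 * σ12 = σ13 := by decide
theorem c123_mul_σ13 : c123 * σ13 = σ23 := by decide
theorem c123_mul_c123 : c123 * c123 = c132 := by decide
theorem c123_mul_c132 : c123 * c132 = 1 := by decide
theorem c132_mul_σ12 : c132 * σ12 = σ23 := by decide
theorem c132_mul_σ13 : c132 * σ13 = σ12 := by decide
theorem c132_mul_c123 : c132 * c123 = 1 := by decide
theorem c132_mul_c132 : c132 * c132 = c123 := by decide

theorem f₁_add_f₂_add_e : f₁ + f₂ + e = 1 := by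
  have hsum : (1 + g σ12 - g σ13 - g c123) + (1 + g σ13 - g σ12 - g c132) +
      (1 + g c123 + g c132) = (3 : ℕ) • (1 : GA) := by abel
  rw [f₁, f₂, e, ← smul_add, ← smul_add, hsum, ← Nat.cast_smul_eq_nsmul ZL, smul_smul,
    Nat.cast_ofNat, three_mul_third, one_smul]

/-- In `ℤ₍₂₎[Σ₃]`, the elements `f₁`, `f₂`, `e` form a complete system of orthogonal
idempotents. -/
theorem complete_orthogonal_idempotents :
    f₁ * f₁ = f₁ ∧ f₂ * f₂ = f₂ ∧ e * e = e ∧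
    f₁ * f₂ = 0 ∧ f₂ * f₁ = 0 ∧ f₁ * e = 0 ∧ e * f₁ = 0 ∧ f₂ * e = 0 ∧ e * f₂ = 0 ∧
    f₁ + f₂ + e = 1 := by
  have idem {x y z : GA} : x * y = 3 • z → (third • x) * (third • y) = third • z :=
    smul_mul_smul_of_mul_eq_nsmul three_mul_third
  have orth {x y : GA} : x * y = 0 → (third • x) * (third • y) = 0 :=
    smul_mul_smul_of_mul_eq_zero third
  refine ⟨idem ?_, idem ?_, idem ?_, orth ?_, orth ?_, orth ?_, orth ?_, orth ?_, orth ?_,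
    f₁_add_f₂_add_e⟩
  all_goals
    simp only [mul_add, add_mul, mul_sub, sub_mul, mul_one, one_mul, g_mul_g, g_one,
      σ12_mul_σ12, σ12_mul_σ13, σ12_mul_c123, σ12_mul_c132, σ13_mul_σ12, σ13_mul_σ13,
      σ13_mul_c123, σ13_mul_c132, c123_mul_σ12, c123_mul_σ13, c123_mul_c123, c123_mul_c132,
      c132_mul_σ12, c132_mul_σ13, c132_mul_c123, c132_mul_c132]
    abel

end
end
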